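/- arXiv:2512.12031 — 6 statements merged into one kernel-verified Lean document; each statement's English description precedes it below -/
import Mathlib

section
/- Fix an integer h ≥ 2. There exists N such that for every integer n ≥ N and every integer s with 1 ≤ s ≤ n/2, the quantity m = 2 · ∑_{i=1}^{min(h−1,s)} C(s,i) · C(n−s, h−i) satisfies m ≥ 2 s (1 − s/n)^{h−1} · C(n−1, h−1), where C(·,·) denotes the binomial coefficient. -/
/-!
Put `a = n - s`, `k = h - 1`, and write `(x)_k` for the falling factorial. The terms `i = 1, 2`
of the sum alone suffice: as `k! C(a, k) = (a)_k`, it is enough to show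
`(1 - s/n)^k (n-1)_k ≤ (a)_k + (s-1)/2 · (k-1) · (a)_{k-1}`.
This goes by induction on `k`. Passing from `k` to `k + 1` multiplies the left side by
`(1 - s/n)(n-1-k) = (a - k) + (ks - a)/n ≤ (a - k) + k(s-1)/n`, and once `n ≥ 2k²`
the error `k(s-1)/n` costs at most one more copy of `(s-1)/2 · (a)_k`.
-/

open Finset Nat Polynomial

theorem one_sub_div_mul_sub_le {s n j : ℝ} (hn : 0 < n) (hj : j ≤ n - s) :
    (1 - s / n) * (n - 1 - j) ≤ n - s - j + j * (s - 1) / n := by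
  have : (1 - s / n) * (n - 1 - j) = n - s - j + (j * s - (n - s)) / n := by field_simp; ring
  rw [this]
  gcongr
  linarith

theorem descPochhammer_add_mul_le_succ {s n : ℝ} (hs : 1 ≤ s) (hsn : 2 * s ≤ n) (k : ℕ)
    (hkn : 2 * ((k : ℝ) + 2) ^ 2 ≤ n) :
    ((descPochhammer ℝ (k + 1)).eval (n - s) +
        (s - 1) / 2 * k * (descPochhammer ℝ k).eval (n - s)) *
        (n - s - (k + 1) + (k + 1) * (s - 1) / n) ≤
      (descPochhammer ℝ (k + 2)).eval (n - s) +
        (s - 1) / 2 * (k + 1) * (descPochhammer ℝ (k + 1)).eval (n - s) := by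
  have hn : 0 < n := by linarith
  have hk0 : (0 : ℝ) ≤ k := k.cast_nonneg
  set x := n - s
  set t := (s - 1) / 2 with ht
  set E : ℕ → ℝ := fun j => (descPochhammer ℝ j).eval x
  have htx : t ≤ x - k := by nlinarith
  have ht0 : 0 ≤ t := by linarith
  have hE0 : 0 ≤ E k := descPochhammer_nonneg (by nlinarith)
  have hE1 : E (k + 1) = E k * (x - k) := descPochhammer_succ_eval k x
  have hE1_nonneg : 0 ≤ E (k + 1) := by rw [hE1]; nlinarith
  have hE2 : E (k + 2) = E (k + 1) * (x - (k + 1)) := by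
    simpa using descPochhammer_succ_eval (k + 1) x
  have hX : E (k + 1) + t * k * E k ≤ (k + 1) * E (k + 1) := by
    rw [hE1]; nlinarith [mul_le_mul_of_nonneg_left htx (mul_nonneg hk0 hE0)]
  have herror : (k + 1) * (s - 1) / n * (E (k + 1) + t * k * E k) ≤ t * E (k + 1) :=
    calc (k + 1) * (s - 1) / n * (E (k + 1) + t * k * E k)
        ≤ (k + 1) * (s - 1) / n * ((k + 1) * E (k + 1)) := by gcongr
      _ = t * E (k + 1) * (2 * (k + 1) ^ 2 / n) := by ring
      _ ≤ t * E (k + 1) :=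
        mul_le_of_le_one_right (by positivity) ((div_le_one hn).mpr (by nlinarith))
  have hshift : t * k * E k * (x - (k + 1)) ≤ t * k * E (k + 1) := by
    rw [hE1]; nlinarith [mul_nonneg (mul_nonneg ht0 hk0) hE0]
  calc (E (k + 1) + t * k * E k) * (x - (k + 1) + (k + 1) * (s - 1) / n)
      = E (k + 2) + t * k * E k * (x - (k + 1)) +
          (k + 1) * (s - 1) / n * (E (k + 1) + t * k * E k) := by
        rw [hE2]; ring
    _ ≤ E (k + 2) + t * (k + 1) * E (k + 1) := by linarith

theorem one_sub_div_pow_mul_descPochhammer_le {s n : ℝ} (hs : 1 ≤ s) (hsn : 2 * s ≤ n)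
    (k : ℕ) (hkn : 2 * ((k : ℝ) + 1) ^ 2 ≤ n) :
    (1 - s / n) ^ (k + 1) * (descPochhammer ℝ (k + 1)).eval (n - 1) ≤
      (descPochhammer ℝ (k + 1)).eval (n - s) +
        (s - 1) / 2 * k * (descPochhammer ℝ k).eval (n - s) := by
  have hn : 0 < n := by linarith
  induction k with
  | zero => simpa using one_sub_div_mul_sub_le (j := 0) hn (by linarith)
  | succ k ih =>
    have hk0 : (0 : ℝ) ≤ k := k.cast_nonneg
    push_cast at hkn ih ⊢
    have ih := ih (by nlinarith)
    have hfactor : (1 - s / n) ^ (k + 2) * (descPochhammer ℝ (k + 2)).eval (n - 1) =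
        (1 - s / n) ^ (k + 1) * (descPochhammer ℝ (k + 1)).eval (n - 1) *
          ((1 - s / n) * (n - 1 - (k + 1))) := by
      rw [descPochhammer_succ_eval, pow_succ]; push_cast; ring
    have hfactor_nonneg : 0 ≤ (1 - s / n) * (n - 1 - (k + 1)) :=
      mul_nonneg (sub_nonneg.mpr ((div_le_one hn).mpr (by linarith))) (by nlinarith)
    have hbound_nonneg : 0 ≤ (descPochhammer ℝ (k + 1)).eval (n - s) +
        (s - 1) / 2 * k * (descPochhammer ℝ k).eval (n - s) := by
      have h1 : 0 ≤ (descPochhammer ℝ (k + 1)).eval (n - s) :=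
        descPochhammer_nonneg (by push_cast; nlinarith)
      have h2 : 0 ≤ (descPochhammer ℝ k).eval (n - s) := descPochhammer_nonneg (by nlinarith)
      have h3 : 0 ≤ s - 1 := by linarith
      positivity
    rw [hfactor]
    refine (mul_le_mul ih (one_sub_div_mul_sub_le hn (by nlinarith)) hfactor_nonneg
      hbound_nonneg).trans ?_
    exact descPochhammer_add_mul_le_succ hs hsn k (by linarith)

theorem descFactorial_add_choose_two_mul_le_factorial_mul_sum {s : ℕ} (hs : 1 ≤ s) (a k : ℕ) :
    s * a.descFactorial (k + 1) + s.choose 2 * k * a.descFactorial k ≤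
      (k + 1)! * ∑ i ∈ Icc 1 (min (k + 1) s), s.choose i * a.choose (k + 2 - i) := by
  set f := fun i => s.choose i * a.choose (k + 2 - i)
  have hf1 : s * a.descFactorial (k + 1) = (k + 1)! * f 1 := by
    simp only [f, descFactorial_eq_factorial_mul_choose, choose_one_right,
      show k + 2 - 1 = k + 1 by omega]
    ring
  have hf2 : s.choose 2 * k * a.descFactorial k ≤ (k + 1)! * f 2 :=
    calc s.choose 2 * k * a.descFactorial k = k * (s.choose 2 * (k ! * a.choose k)) := by
          rw [descFactorial_eq_factorial_mul_choose]; ring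
      _ ≤ (k + 1) * (s.choose 2 * (k ! * a.choose k)) := Nat.mul_le_mul_right _ k.le_succ
      _ = (k + 1)! * f 2 := by simp only [f, factorial_succ, Nat.add_sub_cancel]; ring
  by_cases h2 : 2 ≤ min (k + 1) s
  · calc _ ≤ (k + 1)! * f 1 + (k + 1)! * f 2 := by rw [hf1]; exact Nat.add_le_add_left hf2 _
      _ = (k + 1)! * ∑ i ∈ {1, 2}, f i := by rw [sum_pair (by norm_num), mul_add]
      _ ≤ _ := Nat.mul_le_mul_left _ <| sum_le_sum_of_subset <| by
          intro i hi
          simp only [mem_insert, mem_singleton] at hi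
          simp only [mem_Icc]
          omega
  · have hk : s.choose 2 * k = 0 := by
      rcases Nat.lt_or_ge s 2 with hs2 | hs2
      · rw [choose_eq_zero_of_lt hs2, zero_mul]
      · rw [show k = 0 by omega, mul_zero]
    rw [hk, zero_mul, add_zero, hf1]
    exact Nat.mul_le_mul_left _ <|
      single_le_sum (fun _ _ => Nat.zero_le _) (by simp only [mem_Icc]; omega)

/-- For every integer `h ≥ 2` there exists `N` such that for all `n ≥ N` and all integers
`s` with `1 ≤ s ≤ n/2`, the quantity `m = 2 ∑_{i=1}^{min(h−1,s)} C(s,i) C(n−s,h−i)`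
satisfies `m ≥ 2 s (1 − s/n)^{h−1} C(n−1,h−1)`. -/
theorem stmt3 (h : ℕ) (hh : 2 ≤ h) :
    ∃ N : ℕ, ∀ n : ℕ, N ≤ n → ∀ s : ℕ, 1 ≤ s → 2 * s ≤ n →
      ((2 * ∑ i ∈ Finset.Icc 1 (min (h - 1) s), (s.choose i) * ((n - s).choose (h - i)) : ℕ) : ℝ)
        ≥ 2 * (s : ℝ) * (1 - (s : ℝ) / (n : ℝ)) ^ (h - 1) * ((n - 1).choose (h - 1) : ℝ) := by
  refine ⟨2 * h ^ 2, fun n hn s hs hsn => ?_⟩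
  obtain ⟨k, rfl⟩ : ∃ k, h = k + 2 := ⟨h - 2, by omega⟩
  rw [show k + 2 - 1 = k + 1 from rfl]
  set S := ∑ i ∈ Icc 1 (min (k + 1) s), s.choose i * (n - s).choose (k + 2 - i)
  have hbound := one_sub_div_pow_mul_descPochhammer_le (s := s) (n := n) (by exact_mod_cast hs)
    (by exact_mod_cast hsn) k (by exact_mod_cast (by nlinarith : 2 * (k + 1) ^ 2 ≤ n))
  have hsum : (s : ℝ) * (descPochhammer ℝ (k + 1)).eval ((n : ℝ) - s) +
      s * (s - 1) / 2 * k * (descPochhammer ℝ k).eval ((n : ℝ) - s) ≤ (k + 1)! * S := by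
    rw [← Nat.cast_sub (by omega), descPochhammer_eval_eq_descFactorial,
      descPochhammer_eval_eq_descFactorial, ← Nat.cast_choose_two]
    exact_mod_cast descFactorial_add_choose_two_mul_le_factorial_mul_sum hs (n - s) k
  rw [Nat.cast_choose_eq_descPochhammer_div, Nat.cast_sub (by omega : 1 ≤ n), Nat.cast_one,
    ge_iff_le, ← mul_div_assoc, div_le_iff₀ (by positivity), Nat.cast_mul, Nat.cast_two]
  linarith [mul_le_mul_of_nonneg_left hbound (by positivity : (0 : ℝ) ≤ 2 * s)]
end

section
/- Let a ≥ b > 0, c > 0 and β > 0 satisfy c(a − b) > β. Define θ(λ) = c(a + b − a e^{−λ} − b e^{λ}) − λβ for λ > 0, and set γ = √(β² + 4 c² a b). Then the supremum of θ over λ > 0 is attained at λ* = log((γ − β)/(2 c b)) > 0, and sup_{λ>0} θ(λ) = c·( a + b − 2√(ab) · √( β²/(4 c² a b) + 1 ) ) − (β/2)·log(a/b) + (β/2)·log( (γ + β)/(γ − β) ). -/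
/-!
Writing `λ = log x + u`, the stationarity condition `c a / x = c b x + β` of `θ` at `λ = log x`
turns `θ (log x) - θ λ` into `c b x (e^u + e^{-u} - 2) + β (e^{-u} - 1 + u)`, which is
nonnegative by `1 + t ≤ e^t`. The condition is the quadratic `c b x² + β x = c a`, whose positive
root is `x = (γ - β) / (2 c b)`; it exceeds `1` exactly when `β < c (a - b)`. At this root
`c a / x + c b x = γ` and `(γ - β) (γ + β) = 4 c² a b`, which gives the closed form of `θ (log x)`.
-/

open Real

noncomputable def chernoffExponent (a b c β lam : ℝ) : ℝ :=
  c * (a + b - a * exp (-lam) - b * exp lam) - lam * β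

theorem chernoffExponent_log {x : ℝ} (a b c β : ℝ) (hx : 0 < x) :
    chernoffExponent a b c β (log x) = c * (a + b) - (c * a / x + c * b * x) - β * log x := by
  rw [chernoffExponent, exp_neg, exp_log hx]
  ring

theorem div_eq_mul_add_of_quadratic {p q β x : ℝ} (hx : x ≠ 0) (h : q * x ^ 2 + β * x = p) :
    p / x = q * x + β := by
  rw [← h]
  field_simp

theorem chernoffExponent_le_chernoffExponent_log {a b c β x : ℝ} (hcb : 0 ≤ c * b)
    (hβ : 0 ≤ β) (hx : 0 < x) (hroot : c * b * x ^ 2 + β * x = c * a) (lam : ℝ) :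
    chernoffExponent a b c β lam ≤ chernoffExponent a b c β (log x) := by
  obtain ⟨u, rfl⟩ : ∃ u, lam = log x + u := ⟨lam - log x, by ring⟩
  have hstat := div_eq_mul_add_of_quadratic hx.ne' hroot
  have hexp : exp (log x + u) = x * exp u := by rw [exp_add, exp_log hx]
  have hexp_neg : exp (-(log x + u)) = exp (-u) / x := by
    rw [neg_add, exp_add, exp_neg (log x), exp_log hx]
    ring
  have hdiff : chernoffExponent a b c β (log x) - chernoffExponent a b c β (log x + u)
      = c * b * x * (exp u + exp (-u) - 2) + β * (exp (-u) - 1 + u) := by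
    rw [chernoffExponent_log a b c β hx, chernoffExponent, hexp, hexp_neg]
    linear_combination (exp (-u) - 1) * hstat
  have hu := add_one_le_exp u
  have hu_neg := add_one_le_exp (-u)
  linarith [mul_nonneg (mul_nonneg hcb hx.le) (by linarith : 0 ≤ exp u + exp (-u) - 2),
    mul_nonneg hβ (by linarith : 0 ≤ exp (-u) - 1 + u)]

section Root

variable {a b c β γ x : ℝ}

theorem quadratic_of_two_mul_eq_sub (hcb : c * b ≠ 0) (hγ : γ ^ 2 = β ^ 2 + 4 * c ^ 2 * a * b)
    (hx : 2 * c * b * x = γ - β) : c * b * x ^ 2 + β * x = c * a := by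
  have h : 4 * (c * b) * (c * b * x ^ 2 + β * x - c * a) = 0 := by
    linear_combination (2 * c * b * x + γ + β) * hx + hγ
  simpa [hcb, sub_eq_zero] using h

theorem one_lt_of_two_mul_eq_sub (hb : 0 < b) (hc : 0 < c) (hγ0 : 0 ≤ γ)
    (hγ : γ ^ 2 = β ^ 2 + 4 * c ^ 2 * a * b) (hgap : β < c * (a - b))
    (hx : 2 * c * b * x = γ - β) : 1 < x := by
  have hcb : 0 < c * b := mul_pos hc hb
  have : 2 * c * b + β < γ := by
    apply lt_of_pow_lt_pow_left₀ 2 hγ0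
    nlinarith
  nlinarith

theorem two_mul_log_of_two_mul_eq_sub (ha : 0 < a) (hb : 0 < b) (hc : 0 < c) (hβ : 0 < β)
    (hγ0 : 0 ≤ γ) (hγ : γ ^ 2 = β ^ 2 + 4 * c ^ 2 * a * b) (hx : 2 * c * b * x = γ - β) :
    2 * log x = log (a / b) - log ((γ + β) / (γ - β)) := by
  have hβγ : β < γ := by
    apply lt_of_pow_lt_pow_left₀ 2 hγ0
    nlinarith [mul_pos (mul_pos hc hc) (mul_pos ha hb)]
  have hcross : 4 * c ^ 2 * b * (x ^ 2 * (γ + β) * b - a * (γ - β)) = 0 := by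
    linear_combination (γ + β) * (2 * c * b * x + γ - β) * hx + (γ - β) * hγ
  have hsq : x ^ 2 = a / b / ((γ + β) / (γ - β)) := by
    have : x ^ 2 * (γ + β) * b = a * (γ - β) := by
      simpa [hc.ne', hb.ne', sub_eq_zero] using hcross
    field_simp
    linear_combination this
  rw [← log_div (by positivity) (div_pos (by linarith) (by linarith)).ne', ← hsq, log_pow]
  push_cast
  ring

end Root

theorem mul_two_mul_sqrt_mul_sqrt_div_add_one {a b c β : ℝ} (ha : 0 < a) (hb : 0 < b)
    (hc : 0 < c) :
    c * (2 * √(a * b) * √(β ^ 2 / (4 * c ^ 2 * a * b) + 1)) = √(β ^ 2 + 4 * c ^ 2 * a * b) := by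
  calc c * (2 * √(a * b) * √(β ^ 2 / (4 * c ^ 2 * a * b) + 1))
      = √((2 * c) ^ 2) * √(a * b) * √(β ^ 2 / (4 * c ^ 2 * a * b) + 1) := by
        rw [sqrt_sq (by positivity)]
        ring
    _ = √((2 * c) ^ 2 * (a * b) * (β ^ 2 / (4 * c ^ 2 * a * b) + 1)) := by
        rw [← sqrt_mul (sq_nonneg _), ← sqrt_mul (by positivity)]
    _ = √(β ^ 2 + 4 * c ^ 2 * a * b) := by
        congr 1
        field_simp
        ring

theorem stmt5_general (a b c β : ℝ) (hb : 0 < b) (hc : 0 < c) (hβ : 0 < β)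
    (hgap : β < c * (a - b)) :
    0 < Real.log ((Real.sqrt (β ^ 2 + 4 * c ^ 2 * a * b) - β) / (2 * c * b)) ∧
    IsGreatest
      ((fun lam : ℝ => c * (a + b - a * Real.exp (-lam) - b * Real.exp lam) - lam * β) ''
        Set.Ioi 0)
      ((fun lam : ℝ => c * (a + b - a * Real.exp (-lam) - b * Real.exp lam) - lam * β)
        (Real.log ((Real.sqrt (β ^ 2 + 4 * c ^ 2 * a * b) - β) / (2 * c * b)))) ∧
    (fun lam : ℝ => c * (a + b - a * Real.exp (-lam) - b * Real.exp lam) - lam * β)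
        (Real.log ((Real.sqrt (β ^ 2 + 4 * c ^ 2 * a * b) - β) / (2 * c * b)))
      = c * (a + b - 2 * Real.sqrt (a * b) * Real.sqrt (β ^ 2 / (4 * c ^ 2 * a * b) + 1))
          - (β / 2) * Real.log (a / b)
          + (β / 2) * Real.log ((Real.sqrt (β ^ 2 + 4 * c ^ 2 * a * b) + β) /
              (Real.sqrt (β ^ 2 + 4 * c ^ 2 * a * b) - β)) := by
  change 0 < log _ ∧ IsGreatest (chernoffExponent a b c β '' _) (chernoffExponent a b c β _) ∧
    chernoffExponent a b c β _ = _
  have ha : 0 < a := by nlinarith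
  have hsqrt := mul_two_mul_sqrt_mul_sqrt_div_add_one (β := β) ha hb hc
  set γ := √(β ^ 2 + 4 * c ^ 2 * a * b)
  have hγ : γ ^ 2 = β ^ 2 + 4 * c ^ 2 * a * b := sq_sqrt (by positivity)
  generalize hx_def : (γ - β) / (2 * c * b) = x
  have hx : 2 * c * b * x = γ - β := by rw [← hx_def]; exact mul_div_cancel₀ _ (by positivity)
  have hx1 : 1 < x := one_lt_of_two_mul_eq_sub hb hc (sqrt_nonneg _) hγ hgap hx
  have hroot := quadratic_of_two_mul_eq_sub (by positivity) hγ hx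
  have hlog := two_mul_log_of_two_mul_eq_sub ha hb hc hβ (sqrt_nonneg _) hγ hx
  refine ⟨log_pos hx1, ⟨Set.mem_image_of_mem _ (log_pos hx1), ?_⟩, ?_⟩
  · rintro _ ⟨lam, -, rfl⟩
    exact chernoffExponent_le_chernoffExponent_log (by positivity) hβ.le (by linarith) hroot lam
  · have hsum : c * a / x + c * b * x = γ := by
      linarith [div_eq_mul_add_of_quadratic (by linarith) hroot]
    rw [chernoffExponent_log a b c β (by linarith), hsum]
    linear_combination (-β / 2) * hlog + hsqrt

/-- Exact optimization of the Chernoff exponent `θ(λ) = c(a + b − a e^{−λ} − b e^{λ}) − λβ`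
over `λ > 0`, for positive reals `a ≥ b > 0`, `c > 0`, `β > 0` with `c(a−b) > β`:
the supremum is attained at `λ* = log((γ−β)/(2cb)) > 0`, where `γ = √(β² + 4c²ab)`, and
`sup θ = c(a + b − 2√(ab) √(β²/(4c²ab) + 1)) − (β/2) log(a/b) + (β/2) log((γ+β)/(γ−β))`. -/
theorem stmt5 (a b c β : ℝ) (hb : 0 < b) (hba : b ≤ a) (hc : 0 < c) (hβ : 0 < β)
    (hgap : β < c * (a - b)) :
    0 < Real.log ((Real.sqrt (β ^ 2 + 4 * c ^ 2 * a * b) - β) / (2 * c * b)) ∧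
    IsGreatest
      ((fun lam : ℝ => c * (a + b - a * Real.exp (-lam) - b * Real.exp lam) - lam * β) ''
        Set.Ioi 0)
      ((fun lam : ℝ => c * (a + b - a * Real.exp (-lam) - b * Real.exp lam) - lam * β)
        (Real.log ((Real.sqrt (β ^ 2 + 4 * c ^ 2 * a * b) - β) / (2 * c * b)))) ∧
    (fun lam : ℝ => c * (a + b - a * Real.exp (-lam) - b * Real.exp lam) - lam * β)
        (Real.log ((Real.sqrt (β ^ 2 + 4 * c ^ 2 * a * b) - β) / (2 * c * b)))
      = c * (a + b - 2 * Real.sqrt (a * b) * Real.sqrt (β ^ 2 / (4 * c ^ 2 * a * b) + 1))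
          - (β / 2) * Real.log (a / b)
          + (β / 2) * Real.log ((Real.sqrt (β ^ 2 + 4 * c ^ 2 * a * b) + β) /
              (Real.sqrt (β ^ 2 + 4 * c ^ 2 * a * b) - β)) :=
  stmt5_general a b c β hb hc hβ hgap
end

section
/- Fix an integer h ≥ 2 and reals a ≥ b > 0, t > 0, ε > 0. Set μ = a + b − 2√(ab) · √( (t+1)²/(16 a b ε²) · (h/(h−1))^{2h−2} + 1 ). There exists N such that for every integer n ≥ N and every integer s with 1 ≤ s ≤ n/2 the following holds: let m = 2 ∑_{i=1}^{min(h−1,s)} C(s,i) C(n−s,h−i), let p = a·log n / C(n−1,h−1) and q = b·log n / C(n−1,h−1), and let X₁ ~ Binomial(m, p) and X₂ ~ Binomial(m, q) be independent. Then Pr( X₁ − X₂ < ((t+1)/ε)·log n ) ≤ n^{ −( (4 s (1 − s/n) / 2^{h−1}) · μ − ((t+1)/(2ε)) · log(a/b) ) }. -/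
/-- The probability mass function of the binomial distribution `Binomial(m, p)`. -/
noncomputable def binomPMF (m : ℕ) (p : ℝ) (k : ℕ) : ℝ :=
  (m.choose k : ℝ) * p ^ k * (1 - p) ^ (m - k)

/-! Chernoff's method: for `λ ≥ 0`,
`P(X₁ - X₂ < c) ≤ E e^{-λX₁} · E e^{λX₂} · e^{λc} ≤ exp (m p (e^{-λ} - 1) + m q (e^λ - 1) + λ c)`.
With `e^λ = √(a/b)` the exponent becomes
`-(m / C(n-1,h-1)) (√a - √b)² log n + ((t+1)/(2ε)) log (a/b) log n`,
and `μ ≤ (√a - √b)²` because the second square root in `μ` is at least `1`. It remains to bound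
`m / 2 = C(n,h) - C(s,h) - C(n-s,h) ≥ C(n,h) (1 - x^h - (1-x)^h)` with `x = s/n ≤ 1/2`, and
`1 - x^h - (1-x)^h ≥ h x (1-x)^{h-1} ≥ 4 h x (1-x) / 2^h`.
Largeness of `n` is needed only to make `p = a log n / C(n-1,h-1) ≤ 1`, so that `binomPMF m p`
is a probability distribution. -/

open Finset Real Filter

section Binomial

variable {m : ℕ} {p q : ℝ}

lemma binomPMF_nonneg (hp₀ : 0 ≤ p) (hp₁ : p ≤ 1) (k : ℕ) : 0 ≤ binomPMF m p k := by
  have : 0 ≤ 1 - p := sub_nonneg.2 hp₁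
  unfold binomPMF
  positivity

lemma sum_binomPMF_mul_pow (u : ℝ) :
    ∑ k ∈ range (m + 1), binomPMF m p k * u ^ k = (p * u + (1 - p)) ^ m := by
  rw [add_pow]
  refine sum_congr rfl fun k _ => ?_
  rw [binomPMF, mul_pow]
  ring

lemma sum_binomPMF_mul_pow_le_exp (hp₀ : 0 ≤ p) (hp₁ : p ≤ 1) {u : ℝ} (hu : 0 ≤ u) :
    ∑ k ∈ range (m + 1), binomPMF m p k * u ^ k ≤ exp (m * (p * (u - 1))) := by
  rw [sum_binomPMF_mul_pow, exp_nat_mul]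
  refine pow_le_pow_left₀ (by nlinarith) ?_ m
  linarith [add_one_le_exp (p * (u - 1))]

theorem chernoff_binomPMF_sub (hp₀ : 0 ≤ p) (hp₁ : p ≤ 1) (hq₀ : 0 ≤ q) (hq₁ : q ≤ 1)
    (c : ℝ) {lam : ℝ} (hlam : 0 ≤ lam) :
    ∑ k₁ ∈ range (m + 1), ∑ k₂ ∈ range (m + 1),
        (if (k₁ : ℝ) - k₂ < c then binomPMF m p k₁ * binomPMF m q k₂ else 0)
      ≤ exp (m * (p * (exp (-lam) - 1) + q * (exp lam - 1)) + lam * c) := by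
  have hterm (k₁ k₂ : ℕ) :
      (if (k₁ : ℝ) - k₂ < c then binomPMF m p k₁ * binomPMF m q k₂ else 0)
        ≤ binomPMF m p k₁ * exp (-lam) ^ k₁ * (binomPMF m q k₂ * exp lam ^ k₂) * exp (lam * c) := by
    have h₁ := binomPMF_nonneg (m := m) hp₀ hp₁ k₁
    have h₂ := binomPMF_nonneg (m := m) hq₀ hq₁ k₂
    split_ifs with hk
    · have htilt : 1 ≤ exp (-lam) ^ k₁ * exp lam ^ k₂ * exp (lam * c) := by
        rw [← exp_nat_mul, ← exp_nat_mul, ← exp_add, ← exp_add]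
        exact one_le_exp (by nlinarith)
      calc binomPMF m p k₁ * binomPMF m q k₂
          ≤ binomPMF m p k₁ * binomPMF m q k₂ * (exp (-lam) ^ k₁ * exp lam ^ k₂ * exp (lam * c)) :=
            le_mul_of_one_le_right (by positivity) htilt
        _ = _ := by ring
    · positivity
  calc _ ≤ ∑ k₁ ∈ range (m + 1), ∑ k₂ ∈ range (m + 1),
        binomPMF m p k₁ * exp (-lam) ^ k₁ * (binomPMF m q k₂ * exp lam ^ k₂) * exp (lam * c) :=
        sum_le_sum fun k₁ _ => sum_le_sum fun k₂ _ => hterm k₁ k₂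
    _ = (∑ k ∈ range (m + 1), binomPMF m p k * exp (-lam) ^ k)
          * (∑ k ∈ range (m + 1), binomPMF m q k * exp lam ^ k) * exp (lam * c) := by
        rw [sum_mul_sum, sum_mul]
        simp only [sum_mul]
    _ ≤ exp (m * (p * (exp (-lam) - 1))) * exp (m * (q * (exp lam - 1))) * exp (lam * c) := by
        gcongr
        · exact sum_nonneg fun k _ => mul_nonneg (binomPMF_nonneg hq₀ hq₁ k) (by positivity)
        · exact sum_binomPMF_mul_pow_le_exp hp₀ hp₁ (exp_pos _).le
        · exact sum_binomPMF_mul_pow_le_exp hq₀ hq₁ (exp_pos _).le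
    _ = _ := by rw [← exp_add, ← exp_add]; ring_nf

theorem chernoff_binomPMF_sub_sqrt_div {a b C L M θ : ℝ} (hb : 0 < b) (hba : b ≤ a)
    (hC : 0 < C) (hL : 0 ≤ L) (haL : a * L ≤ C) (hMm : M * C ≤ m) :
    ∑ k₁ ∈ range (m + 1), ∑ k₂ ∈ range (m + 1),
        (if (k₁ : ℝ) - k₂ < θ * L then binomPMF m (a * L / C) k₁ * binomPMF m (b * L / C) k₂
          else 0)
      ≤ exp (L * -(M * (a + b - 2 * √(a * b)) - θ / 2 * log (a / b))) := by
  obtain ⟨r, hr, rfl⟩ : ∃ r, 1 ≤ r ∧ a = b * r ^ 2 :=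
    ⟨√(a / b), one_le_sqrt.2 ((one_le_div hb).2 hba), by
      rw [sq_sqrt (div_pos (hb.trans_le hba) hb).le]
      field_simp⟩
  have hsqrt : √(b * r ^ 2 * b) = b * r := by
    rw [show b * r ^ 2 * b = (b * r) ^ 2 by ring, sqrt_sq (by positivity)]
  have hlog : log (b * r ^ 2 / b) = 2 * log r := by
    rw [mul_div_cancel_left₀ _ hb.ne', log_pow, Nat.cast_ofNat]
  have hp₁ : b * r ^ 2 * L / C ≤ 1 := (div_le_one hC).2 haL
  have hq₁ : b * L / C ≤ 1 := le_trans (by gcongr) hp₁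
  refine (chernoff_binomPMF_sub (by positivity) hp₁ (by positivity) hq₁ (θ * L)
    (log_nonneg hr)).trans (exp_le_exp.2 ?_)
  have hMC : M ≤ m / C := (le_div_iff₀ hC).2 hMm
  have hexponent :
      (m : ℝ) * (b * r ^ 2 * L / C * (exp (-log r) - 1) + b * L / C * (exp (log r) - 1))
        = -(m / C) * (L * (b * (r - 1) ^ 2)) := by
    rw [exp_neg, exp_log (by positivity)]
    field_simp
    ring
  rw [hexponent, hsqrt, hlog]
  nlinarith [mul_le_mul_of_nonneg_right hMC (by positivity : 0 ≤ L * (b * (r - 1) ^ 2))]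

end Binomial

lemma Nat.choose_mul_pow_le_pow_mul_choose {s n : ℕ} (hsn : s ≤ n) (h : ℕ) :
    s.choose h * n ^ h ≤ s ^ h * n.choose h := by
  have hdesc : s.descFactorial h * n ^ h ≤ s ^ h * n.descFactorial h := by
    rw [Nat.descFactorial_eq_prod_range, Nat.descFactorial_eq_prod_range]
    calc (∏ i ∈ range h, (s - i)) * n ^ h = ∏ i ∈ range h, (s - i) * n := by
          rw [prod_mul_distrib, prod_const, card_range]
      _ ≤ ∏ i ∈ range h, s * (n - i) := prod_le_prod' fun i _ => by
          rw [Nat.sub_mul, Nat.mul_sub, mul_comm s i]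
          exact Nat.sub_le_sub_left (Nat.mul_le_mul_left i hsn) _
      _ = s ^ h * ∏ i ∈ range h, (n - i) := by rw [prod_mul_distrib, prod_const, card_range]
  rw [Nat.descFactorial_eq_factorial_mul_choose, Nat.descFactorial_eq_factorial_mul_choose] at hdesc
  refine Nat.le_of_mul_le_mul_left ?_ (Nat.factorial_pos h)
  calc h.factorial * (s.choose h * n ^ h) = h.factorial * s.choose h * n ^ h := by ring
    _ ≤ s ^ h * (h.factorial * n.choose h) := hdesc
    _ = h.factorial * (s ^ h * n.choose h) := by ring

lemma Nat.le_mul_choose {N k : ℕ} (hk : 1 ≤ k) (hkN : k ≤ N) : N ≤ k * N.choose k := by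
  obtain ⟨N, rfl⟩ : ∃ N', N = N' + 1 := ⟨N - 1, by omega⟩
  obtain ⟨k, rfl⟩ : ∃ k', k = k' + 1 := ⟨k - 1, by omega⟩
  have hpos : 1 ≤ N.choose k := Nat.choose_pos (by omega)
  calc N + 1 ≤ (N + 1) * N.choose k := Nat.le_mul_of_pos_right _ hpos
    _ = (k + 1) * (N + 1).choose (k + 1) := by rw [Nat.add_one_mul_choose_eq, mul_comm]

-- The number of `h`-subsets of an `n`-set that meet both a fixed `s`-subset and its complement.
def crossingCount (n s h : ℕ) : ℕ :=
  ∑ i ∈ Icc 1 (min (h - 1) s), s.choose i * (n - s).choose (h - i)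

lemma crossingCount_add_choose_add_choose {s n h : ℕ} (hs : s ≤ n) (hh : 1 ≤ h) :
    crossingCount n s h + s.choose h + (n - s).choose h = n.choose h := by
  obtain ⟨k, rfl⟩ : ∃ k, h = k + 1 := ⟨h - 1, by omega⟩
  rw [crossingCount]
  have htrim : ∑ i ∈ Icc 1 (min k s), s.choose i * (n - s).choose (k + 1 - i)
      = ∑ i ∈ Icc 1 k, s.choose i * (n - s).choose (k + 1 - i) :=
    sum_subset (Icc_subset_Icc_right (min_le_left _ _)) fun i hi hi' => by
      simp only [mem_Icc, le_min_iff, not_and_or, not_le] at hi hi'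
      rw [Nat.choose_eq_zero_of_lt (by omega), zero_mul]
  conv_rhs => rw [← Nat.add_sub_cancel' hs, Nat.add_choose_eq,
    Nat.sum_antidiagonal_eq_sum_range_succ (fun i j => s.choose i * (n - s).choose j),
    sum_range_succ, range_eq_Ico, sum_eq_sum_Ico_succ_bot (Nat.succ_pos k), Nat.succ_eq_add_one,
    zero_add, Ico_add_one_right_eq_Icc]
  simp only [add_tsub_cancel_right, htrim, Nat.choose_zero_right, Nat.sub_zero, Nat.sub_self]
  ring

lemma choose_le_div_pow_mul_choose {s n : ℕ} (hn : 0 < n) (hsn : s ≤ n) (h : ℕ) :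
    (s.choose h : ℝ) ≤ ((s : ℝ) / n) ^ h * n.choose h := by
  rw [div_pow, div_mul_eq_mul_div, le_div_iff₀ (by positivity)]
  exact_mod_cast Nat.choose_mul_pow_le_pow_mul_choose hsn h

lemma mul_mul_one_sub_pow_le_one_sub_pow_sub_pow {x : ℝ} (hx₀ : 0 ≤ x) (hx₁ : x ≤ 1) {h : ℕ}
    (hh : 2 ≤ h) : h * x * (1 - x) ^ (h - 1) ≤ 1 - x ^ h - (1 - x) ^ h := by
  obtain ⟨k, rfl⟩ : ∃ k, h = k + 2 := ⟨h - 2, by omega⟩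
  have hexpand : (1 : ℝ) =
      ∑ i ∈ range (k + 3), x ^ i * (1 - x) ^ (k + 2 - i) * (k + 2).choose i := by
    rw [← add_pow]; norm_num
  have hmiddle : 0 ≤ ∑ i ∈ range k,
      x ^ (i + 1 + 1) * (1 - x) ^ (k + 2 - (i + 1 + 1)) * (k + 2).choose (i + 1 + 1) :=
    sum_nonneg fun i _ => by have := sub_nonneg.2 hx₁; positivity
  rw [sum_range_succ, sum_range_succ', sum_range_succ'] at hexpand
  simp only [Nat.choose_zero_right, Nat.choose_one_right, Nat.choose_self, pow_zero, pow_one,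
    Nat.sub_zero, Nat.sub_self, zero_add, Nat.cast_one, mul_one, one_mul] at hexpand hmiddle
  linarith

lemma mul_choose_le_crossingCount {s n h : ℕ} (hh : 2 ≤ h) (hsn : 2 * s ≤ n) (hhn : h ≤ n) :
    4 * (s : ℝ) * (1 - s / n) / 2 ^ (h - 1) * (n - 1).choose (h - 1)
      ≤ (2 * crossingCount n s h : ℕ) := by
  have hn : 0 < n := by omega
  set x : ℝ := s / n with hx
  have hx₀ : 0 ≤ x := by positivity
  have hx₁ : x ≤ 1 / 2 := by
    rw [hx, div_le_iff₀ (by positivity)]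
    have : (2 * s : ℝ) ≤ n := by exact_mod_cast hsn
    linarith
  have hcount : (crossingCount n s h : ℝ) = n.choose h - s.choose h - (n - s).choose h := by
    have := crossingCount_add_choose_add_choose (s := s) (n := n) (h := h) (by omega) (by omega)
    rw [← this]
    push_cast
    ring
  have hs := choose_le_div_pow_mul_choose hn (by omega : s ≤ n) h
  rw [← hx] at hs
  have hns := choose_le_div_pow_mul_choose hn (by omega : n - s ≤ n) h
  rw [Nat.cast_sub (by omega), sub_div, div_self (by positivity), ← hx] at hns
  have hpow : (1 - x) * (1 / 2) ^ (h - 2) ≤ (1 - x) ^ (h - 1) := by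
    rw [show h - 1 = h - 2 + 1 by omega, pow_succ']
    gcongr
    · linarith
    · linarith
  have hh₀ : (h : ℝ) ≠ 0 := by positivity
  have hsymm : (h : ℝ) * n.choose h = n * (n - 1).choose (h - 1) := by
    have := Nat.add_one_mul_choose_eq (n - 1) (h - 1)
    rw [Nat.sub_add_cancel (by omega), Nat.sub_add_cancel (by omega)] at this
    exact_mod_cast (this.trans (mul_comm _ _)).symm
  have hsx : (n : ℝ) * x = s := by rw [hx]; field_simp
  calc 4 * (s : ℝ) * (1 - x) / 2 ^ (h - 1) * (n - 1).choose (h - 1)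
      = 2 * (n.choose h * (h * x * ((1 - x) * (1 / 2) ^ (h - 2)))) := by
        have h2 : (2 : ℝ) ^ (h - 1) = 2 * 2 ^ (h - 2) := by
          rw [← pow_succ', show h - 2 + 1 = h - 1 by omega]
        have hCn : (n.choose h : ℝ) = n * (n - 1).choose (h - 1) / h := by
          rw [← hsymm, mul_div_cancel_left₀ _ (by positivity)]
        rw [hCn, h2, ← hsx, one_div_pow]
        field_simp
        ring
    _ ≤ 2 * (n.choose h * (h * x * (1 - x) ^ (h - 1))) := by gcongr
    _ ≤ 2 * (n.choose h * (1 - x ^ h - (1 - x) ^ h)) := by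
        gcongr
        exact mul_mul_one_sub_pow_le_one_sub_pow_sub_pow hx₀ (by linarith) hh
    _ ≤ (2 * crossingCount n s h : ℕ) := by
        push_cast
        linarith

lemma eventually_mul_log_le_choose {a : ℝ} (ha : 0 < a) {h : ℕ} (hh : 2 ≤ h) :
    ∀ᶠ n : ℕ in atTop, a * log n ≤ (n - 1).choose (h - 1) := by
  have hh' : (1 : ℝ) ≤ h - 1 := by
    have : (2 : ℝ) ≤ h := by exact_mod_cast hh
    linarith
  filter_upwards [isLittleO_log_id_atTop.natCast_atTop.bound
    (by positivity : 0 < 1 / (2 * a * (h - 1))), eventually_ge_atTop h] with n hlog hn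
  have hn' : (2 : ℝ) ≤ n := by exact_mod_cast hh.trans hn
  have hchoose : (n : ℝ) - 1 ≤ (h - 1) * (n - 1).choose (h - 1) := by
    have := Nat.le_mul_choose (N := n - 1) (k := h - 1) (by omega) (by omega)
    rw [← Nat.cast_le (α := ℝ)] at this
    push_cast [Nat.cast_sub (by omega : 1 ≤ n), Nat.cast_sub (by omega : 1 ≤ h)] at this
    exact this
  simp only [id, norm_eq_abs, abs_of_nonneg (log_natCast_nonneg n), Nat.abs_cast] at hlog
  calc a * log n ≤ a * (1 / (2 * a * (h - 1)) * n) := by gcongr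
    _ = n / 2 / (h - 1) := by field_simp
    _ ≤ (n - 1) / (h - 1) := by gcongr; linarith
    _ ≤ (n - 1).choose (h - 1) := by rwa [div_le_iff₀' (by positivity)]

theorem stmt6_general (h : ℕ) (hh : 2 ≤ h) (a b t ε : ℝ)
    (hb : 0 < b) (hba : b ≤ a) :
    ∃ N : ℕ, ∀ n : ℕ, N ≤ n → ∀ s : ℕ, 1 ≤ s → 2 * s ≤ n →
      (∑ k1 ∈ Finset.range ((2 * ∑ i ∈ Finset.Icc 1 (min (h - 1) s),
            (s.choose i) * ((n - s).choose (h - i))) + 1),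
        ∑ k2 ∈ Finset.range ((2 * ∑ i ∈ Finset.Icc 1 (min (h - 1) s),
            (s.choose i) * ((n - s).choose (h - i))) + 1),
          (if (k1 : ℝ) - (k2 : ℝ) < ((t + 1) / ε) * Real.log n then
            binomPMF (2 * ∑ i ∈ Finset.Icc 1 (min (h - 1) s),
                (s.choose i) * ((n - s).choose (h - i)))
              (a * Real.log n / ((n - 1).choose (h - 1) : ℝ)) k1 *
            binomPMF (2 * ∑ i ∈ Finset.Icc 1 (min (h - 1) s),
                (s.choose i) * ((n - s).choose (h - i)))
              (b * Real.log n / ((n - 1).choose (h - 1) : ℝ)) k2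
          else 0))
      ≤ (n : ℝ) ^ (-((4 * (s : ℝ) * (1 - (s : ℝ) / (n : ℝ)) / 2 ^ (h - 1)) *
            (a + b - 2 * Real.sqrt (a * b) *
              Real.sqrt ((t + 1) ^ 2 / (16 * a * b * ε ^ 2) *
                ((h : ℝ) / ((h : ℝ) - 1)) ^ (2 * h - 2) + 1))
          - ((t + 1) / (2 * ε)) * Real.log (a / b))) := by
  have ha : 0 < a := hb.trans_le hba
  obtain ⟨N, hN⟩ := eventually_atTop.1
    ((eventually_mul_log_le_choose ha hh).and (eventually_ge_atTop h))
  refine ⟨N, fun n hn s hs hsn => ?_⟩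
  obtain ⟨haL, hhn⟩ := hN n hn
  have hL : 0 < log n := log_pos (by exact_mod_cast (by omega : 1 < n))
  have hC : (0 : ℝ) < (n - 1).choose (h - 1) := by exact_mod_cast Nat.choose_pos (by omega)
  have hM : 0 ≤ 4 * (s : ℝ) * (1 - s / n) / 2 ^ (h - 1) := by
    have : (s : ℝ) / n ≤ 1 :=
      div_le_one_of_le₀ (by exact_mod_cast (by omega : s ≤ n)) (by positivity)
    have := sub_nonneg.2 this
    positivity
  have hK :
      1 ≤ √((t + 1) ^ 2 / (16 * a * b * ε ^ 2) * ((h : ℝ) / ((h : ℝ) - 1)) ^ (2 * h - 2) + 1) := by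
    have : (1 : ℝ) ≤ h := by exact_mod_cast (by omega : 1 ≤ h)
    have : (0 : ℝ) ≤ h / (h - 1) := div_nonneg (Nat.cast_nonneg h) (by linarith)
    exact one_le_sqrt.2 (le_add_of_nonneg_left (by positivity))
  rw [rpow_def_of_pos (by exact_mod_cast (by omega : 0 < n)),
    show (t + 1) / (2 * ε) = (t + 1) / ε / 2 by ring]
  refine (chernoff_binomPMF_sub_sqrt_div hb hba hC hL.le haL
    (mul_choose_le_crossingCount hh hsn hhn)).trans (exp_le_exp.2 ?_)
  gcongr log n * -(_ * ?_ - _)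
  linarith [le_mul_of_one_le_right (sqrt_nonneg (a * b)) hK]

/-- Lemma 2 of the paper: for `h ≥ 2`, `a ≥ b > 0`, `t, ε > 0`, and
`μ = a + b − 2√(ab) √((t+1)²/(16 a b ε²) (h/(h−1))^{2h−2} + 1)`, there exists `N` such that
for all `n ≥ N` and `1 ≤ s ≤ n/2`, with `m = 2 ∑_{i=1}^{min(h−1,s)} C(s,i) C(n−s,h−i)`,
`p = a log n / C(n−1,h−1)`, `q = b log n / C(n−1,h−1)` and independent
`X₁ ~ Binomial(m,p)`, `X₂ ~ Binomial(m,q)`: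
`Pr(X₁ − X₂ < ((t+1)/ε) log n) ≤ n^{−((4s(1−s/n)/2^{h−1}) μ − ((t+1)/(2ε)) log(a/b))}`.
The probability is written out explicitly via the joint (product) pmf. -/
theorem stmt6 (h : ℕ) (hh : 2 ≤ h) (a b t ε : ℝ)
    (hb : 0 < b) (hba : b ≤ a) (ht : 0 < t) (hε : 0 < ε) :
    ∃ N : ℕ, ∀ n : ℕ, N ≤ n → ∀ s : ℕ, 1 ≤ s → 2 * s ≤ n →
      (∑ k1 ∈ Finset.range ((2 * ∑ i ∈ Finset.Icc 1 (min (h - 1) s),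
            (s.choose i) * ((n - s).choose (h - i))) + 1),
        ∑ k2 ∈ Finset.range ((2 * ∑ i ∈ Finset.Icc 1 (min (h - 1) s),
            (s.choose i) * ((n - s).choose (h - i))) + 1),
          (if (k1 : ℝ) - (k2 : ℝ) < ((t + 1) / ε) * Real.log n then
            binomPMF (2 * ∑ i ∈ Finset.Icc 1 (min (h - 1) s),
                (s.choose i) * ((n - s).choose (h - i)))
              (a * Real.log n / ((n - 1).choose (h - 1) : ℝ)) k1 *
            binomPMF (2 * ∑ i ∈ Finset.Icc 1 (min (h - 1) s),
                (s.choose i) * ((n - s).choose (h - i)))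
              (b * Real.log n / ((n - 1).choose (h - 1) : ℝ)) k2
          else 0))
      ≤ (n : ℝ) ^ (-((4 * (s : ℝ) * (1 - (s : ℝ) / (n : ℝ)) / 2 ^ (h - 1)) *
            (a + b - 2 * Real.sqrt (a * b) *
              Real.sqrt ((t + 1) ^ 2 / (16 * a * b * ε ^ 2) *
                ((h : ℝ) / ((h : ℝ) - 1)) ^ (2 * h - 2) + 1))
          - ((t + 1) / (2 * ε)) * Real.log (a / b))) :=
  stmt6_general h hh a b t ε hb hba
end

section
/- Fix an integer h ≥ 2 and reals μ > 2^{h−1} and 0 ≤ c ≤ 1. Then ∑_{s=1}^{⌊n/2⌋} C(n,s)² · n^{ −( (4 s (1 − s/n) / 2^{h−1}) · μ − c ) } → 0 as n → ∞. -/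
/-!
Put `ε = μ / 2^{h-1} > 1`. Since `C(n,s) ≤ n^s`, the `s`-th term is at most
`n^{2s + c - 4s(1 - s/n)ε}`, and for `1 ≤ s ≤ n/2` and `n` large this exponent is at most
`-(ε - 1)s`. The sum is then dominated by a geometric series with ratio `n^{-(ε-1)} → 0`,
hence by `2 n^{-(ε-1)}`.
-/

open Filter Finset Real

/- For `s ≤ n/4` use `1 - s/n ≥ 3/4`; for larger `s` use `1 - s/n ≥ 1/2` together with
`(ε - 1) s > (ε - 1) n / 4 ≥ 1`. -/
lemma exponent_le_neg_mul {ε c n s : ℝ} (hc : c ≤ 1) (hn : 4 ≤ (ε - 1) * n) (hs : 1 ≤ s)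
    (hsn : 2 * s ≤ n) :
    2 * s + c - 4 * s * (1 - s / n) * ε ≤ -((ε - 1) * s) := by
  have hn0 : 0 < n := by linarith
  have hε : 1 < ε := by nlinarith
  have hhalf : 1 / 2 ≤ 1 - s / n := by
    rw [le_sub_comm, div_le_iff₀ hn0]; linarith
  rcases le_or_gt (4 * s) n with hsmall | hlarge
  · have h34 : 3 / 4 ≤ 1 - s / n := by
      rw [le_sub_comm, div_le_iff₀ hn0]; linarith
    nlinarith [mul_le_mul_of_nonneg_left h34 (by positivity : 0 ≤ 4 * s * ε)]
  · nlinarith [mul_le_mul_of_nonneg_left hhalf (by positivity : 0 ≤ 4 * s * ε)]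

lemma sum_Icc_one_pow_le_two_mul {x : ℝ} (hx0 : 0 ≤ x) (hx : x ≤ 1 / 2) (m : ℕ) :
    ∑ s ∈ Icc 1 m, x ^ s ≤ 2 * x := by
  have hshift : ∑ s ∈ Icc 1 m, x ^ s = x * ∑ i ∈ range m, x ^ i := by
    rw [← Ico_add_one_right_eq_Icc, sum_Ico_eq_sum_range, mul_sum]
    simp only [add_tsub_cancel_right, add_comm 1, pow_succ']
  have hgeom : ∑ i ∈ range m, x ^ i ≤ 2 :=
    calc ∑ i ∈ range m, x ^ i ≤ ∑ i ∈ range m, (1 / 2 : ℝ) ^ i :=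
          sum_le_sum fun i _ => pow_le_pow_left₀ hx0 hx i
      _ ≤ 2 := sum_geometric_two_le m
  rw [hshift]
  linarith [mul_le_mul_of_nonneg_left hgeom hx0]

lemma choose_sq_mul_rpow_le {ε c : ℝ} (hc : c ≤ 1) {n s : ℕ} (hn : 4 ≤ (ε - 1) * n)
    (hs : 1 ≤ s) (hsn : 2 * s ≤ n) :
    (n.choose s : ℝ) ^ 2 * (n : ℝ) ^ (-(4 * s * (1 - s / n) * ε - c)) ≤
      ((n : ℝ) ^ (-(ε - 1))) ^ s := by
  have hn1 : (1 : ℝ) ≤ n := by exact_mod_cast (by omega : 1 ≤ n)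
  have hn0 : (0 : ℝ) < n := by linarith
  have hchoose : (n.choose s : ℝ) ^ 2 ≤ (n : ℝ) ^ ((2 * s : ℕ) : ℝ) := by
    rw [rpow_natCast, pow_mul']
    gcongr
    exact_mod_cast Nat.choose_le_pow n s
  have hexp := exponent_le_neg_mul hc hn (by exact_mod_cast hs : (1 : ℝ) ≤ s)
    (by exact_mod_cast hsn)
  calc (n.choose s : ℝ) ^ 2 * (n : ℝ) ^ (-(4 * s * (1 - s / n) * ε - c))
      ≤ (n : ℝ) ^ ((2 * s : ℕ) : ℝ) * (n : ℝ) ^ (-(4 * s * (1 - s / n) * ε - c)) := by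
        gcongr
    _ = (n : ℝ) ^ (2 * s + c - 4 * s * (1 - s / n) * ε) := by
        rw [← rpow_add hn0]; push_cast; ring_nf
    _ ≤ (n : ℝ) ^ (-(ε - 1) * s) := by
        apply rpow_le_rpow_of_exponent_le hn1; linarith
    _ = ((n : ℝ) ^ (-(ε - 1))) ^ s := by rw [rpow_mul hn0.le, rpow_natCast]

lemma sum_choose_sq_mul_rpow_le {ε c : ℝ} (hc : c ≤ 1) {n : ℕ} (hn : 4 ≤ (ε - 1) * n)
    (hsmall : (n : ℝ) ^ (-(ε - 1)) ≤ 1 / 2) :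
    ∑ s ∈ Icc 1 (n / 2), (n.choose s : ℝ) ^ 2 * (n : ℝ) ^ (-(4 * s * (1 - s / n) * ε - c)) ≤
      2 * (n : ℝ) ^ (-(ε - 1)) :=
  calc _ ≤ ∑ s ∈ Icc 1 (n / 2), ((n : ℝ) ^ (-(ε - 1))) ^ s := by
        refine sum_le_sum fun s hs => ?_
        rw [mem_Icc] at hs
        exact choose_sq_mul_rpow_le hc hn hs.1 (by omega)
    _ ≤ 2 * (n : ℝ) ^ (-(ε - 1)) :=
        sum_Icc_one_pow_le_two_mul (rpow_nonneg (Nat.cast_nonneg n) _) hsmall _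

theorem stmt7_general (h : ℕ) (μ c : ℝ) (hμ : (2 : ℝ) ^ (h - 1) < μ)
    (hc1 : c ≤ 1) :
    Filter.Tendsto
      (fun n : ℕ => ∑ s ∈ Finset.Icc 1 (n / 2),
        ((n.choose s : ℝ)) ^ 2 *
          (n : ℝ) ^ (-((4 * (s : ℝ) * (1 - (s : ℝ) / (n : ℝ)) / 2 ^ (h - 1)) * μ - c)))
      Filter.atTop (nhds 0) := by
  set ε := μ / 2 ^ (h - 1)
  have hε : 0 < ε - 1 := sub_pos.2 <| (one_lt_div (by positivity)).2 hμ
  have hrewrite : ∀ x : ℝ, x / 2 ^ (h - 1) * μ = x * ε := fun x => by ring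
  simp_rw [hrewrite]
  have hdecay : Tendsto (fun n : ℕ => (n : ℝ) ^ (-(ε - 1))) atTop (nhds 0) :=
    (tendsto_rpow_neg_atTop hε).comp tendsto_natCast_atTop_atTop
  have hlarge : ∀ᶠ n : ℕ in atTop, 4 ≤ (ε - 1) * n :=
    (tendsto_natCast_atTop_atTop.const_mul_atTop hε).eventually_ge_atTop 4
  refine squeeze_zero' (Eventually.of_forall fun n => sum_nonneg fun s _ => by positivity) ?_
    (mul_zero (2 : ℝ) ▸ hdecay.const_mul 2)
  filter_upwards [hlarge, hdecay.eventually (ge_mem_nhds one_half_pos)] with n hn hsmall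
  exact sum_choose_sq_mul_rpow_le hc1 hn hsmall

/-- For `h ≥ 2`, `μ > 2^{h−1}` and `0 ≤ c ≤ 1`, the union-bound sum
`∑_{s=1}^{⌊n/2⌋} C(n,s)² n^{−((4s(1−s/n)/2^{h−1}) μ − c)}` tends to `0` as `n → ∞`. -/
theorem stmt7 (h : ℕ) (hh : 2 ≤ h) (μ c : ℝ) (hμ : (2 : ℝ) ^ (h - 1) < μ)
    (hc0 : 0 ≤ c) (hc1 : c ≤ 1) :
    Filter.Tendsto
      (fun n : ℕ => ∑ s ∈ Finset.Icc 1 (n / 2),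
        ((n.choose s : ℝ)) ^ 2 *
          (n : ℝ) ^ (-((4 * (s : ℝ) * (1 - (s : ℝ) / (n : ℝ)) / 2 ^ (h - 1)) * μ - c)))
      Filter.atTop (nhds 0) :=
  stmt7_general h μ c hμ hc1
end

section
/- Fix an integer h ≥ 2 and reals a > 0, λ > 0. For each n, let p_n = a·log n / C(n−1,h−1), let ε_n be defined by e^{−ε_n} = λ·log n / C(n−1,h−1), and let ν_n = 1/(e^{ε_n} + 1). Define the perturbed probability p̃_n = (1 − ν_n) p_n + ν_n (1 − p_n). Then p̃_n · C(n−1,h−1) / log n → a + λ as n → ∞. -/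
noncomputable def binomCoeff (n h : ℕ) : ℝ := ((n - 1).choose (h - 1) : ℝ)
noncomputable def pSeq (h : ℕ) (a : ℝ) (n : ℕ) : ℝ := a * Real.log n / binomCoeff n h
noncomputable def epsSeq (h : ℕ) (lam : ℝ) (n : ℕ) : ℝ :=
  -Real.log (lam * Real.log n / binomCoeff n h)
noncomputable def nuSeq (h : ℕ) (lam : ℝ) (n : ℕ) : ℝ :=
  1 / (Real.exp (epsSeq h lam n) + 1)
noncomputable def pTildeSeq (h : ℕ) (a lam : ℝ) (n : ℕ) : ℝ :=
  (1 - nuSeq h lam n) * pSeq h a n + nuSeq h lam n * (1 - pSeq h a n)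

lemma aux_alg (a lam x : ℝ) (hx : 0 < x) (hlam : 0 < lam) :
    ((1 - 1/((lam*x)⁻¹ + 1)) * (a*x) + (1/((lam*x)⁻¹ + 1)) * (1 - a*x)) / x
      = (1 - 2*(lam*x/(1+lam*x)))*a + lam/(1+lam*x) := by
  have h1 : (lam*x)⁻¹ + 1 ≠ 0 := by positivity
  have h2 : 1 + lam*x ≠ 0 := by positivity
  field_simp
  ring

/-- For `h ≥ 2`, `a > 0`, `λ > 0`: `p̃_n · C(n−1,h−1) / log n → a + λ` as `n → ∞`. -/
theorem stmt9 (h : ℕ) (hh : 2 ≤ h) (a lam : ℝ) (ha : 0 < a) (hlam : 0 < lam) :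
    Filter.Tendsto
      (fun n : ℕ => pTildeSeq h a lam n * binomCoeff n h / Real.log n)
      Filter.atTop (nhds (a + lam)) := by
  set t : ℕ → ℝ := fun n => Real.log n / binomCoeff n h with ht
  -- t → 0
  have htend : Filter.Tendsto t Filter.atTop (nhds 0) := by
    have hb : Filter.Tendsto (fun x : ℝ => ((h-1).factorial : ℝ) * (Real.log x ^ 1 / (1*x + (1 - h)))) Filter.atTop (nhds (((h-1).factorial : ℝ) * 0)) :=
      (Real.tendsto_pow_log_div_mul_add_atTop 1 (1 - h) 1 one_ne_zero).const_mul _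
    rw [mul_zero] at hb
    have hbn := hb.comp tendsto_natCast_atTop_atTop (f := fun n : ℕ => (n : ℝ))
    apply squeeze_zero' (g := fun n : ℕ => ((h-1).factorial : ℝ) * (Real.log n ^ 1 / (1*(n:ℝ) + (1 - h))))
    · filter_upwards [Filter.eventually_ge_atTop (h+3)] with n hn
      have h1 : (1:ℝ) ≤ n := by exact_mod_cast le_trans (by omega) hn
      have hlog : 0 ≤ Real.log n := Real.log_nonneg h1
      have hc : 0 < binomCoeff n h := by
        unfold binomCoeff
        have : 0 < (n-1).choose (h-1) := Nat.choose_pos (by omega)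
        exact_mod_cast this
      positivity
    · filter_upwards [Filter.eventually_ge_atTop (h+3)] with n hn
      have hlog : 0 ≤ Real.log n := Real.log_nonneg (by exact_mod_cast le_trans (by omega) hn)
      have hkey : ((n - h + 1 : ℕ) : ℝ) ^ (h-1) / (h-1).factorial ≤ binomCoeff n h := by
        have := Nat.pow_le_choose (α := ℝ) (h-1) (n-1)
        unfold binomCoeff
        have he : n - 1 + 1 - (h-1) = n - h + 1 := by omega
        rwa [he] at this
      have hbase : (1:ℝ) ≤ ((n - h + 1 : ℕ) : ℝ) := by exact_mod_cast Nat.one_le_iff_ne_zero.mpr (by omega)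
      have hpow : ((n - h + 1 : ℕ) : ℝ) ≤ ((n - h + 1 : ℕ) : ℝ) ^ (h-1) :=
        le_self_pow₀ hbase (by omega)
      have hfac : (0:ℝ) < (h-1).factorial := by exact_mod_cast Nat.factorial_pos _
      have hc1 : ((n - h + 1 : ℕ) : ℝ) / (h-1).factorial ≤ binomCoeff n h :=
        le_trans (by gcongr) hkey
      have hcast : ((n - h + 1 : ℕ) : ℝ) = 1*(n:ℝ) + (1 - h) := by
        push_cast [Nat.cast_sub (by omega : h ≤ n)]
        ring
      have hden : (0:ℝ) < 1*(n:ℝ) + (1 - h) := by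
        rw [← hcast]; exact lt_of_lt_of_le one_pos hbase
      have hc : 0 < binomCoeff n h :=
        lt_of_lt_of_le (by positivity) hc1
      have hD : (0:ℝ) < 1*(n:ℝ)+(1-h) := hden
      rw [hcast] at hc1
      show Real.log n / binomCoeff n h ≤ _
      rw [pow_one]
      calc Real.log n / binomCoeff n h
          ≤ Real.log n / ((1*(n:ℝ)+(1-h))/(h-1).factorial) :=
            div_le_div_of_nonneg_left hlog (by positivity) hc1
        _ = ((h-1).factorial : ℝ) * (Real.log n / (1*(n:ℝ)+(1-h))) := by
            rw [div_div_eq_mul_div]; ring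
    · exact hbn
  -- continuity
  have hf : Filter.Tendsto (fun x : ℝ => (1 - 2*(lam*x/(1+lam*x)))*a + lam/(1+lam*x)) (nhds 0) (nhds (a + lam)) := by
    have : ContinuousAt (fun x : ℝ => (1 - 2*(lam*x/(1+lam*x)))*a + lam/(1+lam*x)) 0 := by
      have h0 : (1:ℝ) + lam*0 ≠ 0 := by norm_num
      fun_prop (disch := simpa using h0)
    simpa using this.tendsto
  have hcomp := hf.comp htend
  refine hcomp.congr' ?_
  filter_upwards [Filter.eventually_ge_atTop (h+3)] with n hn
  have hc : 0 < binomCoeff n h := by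
    unfold binomCoeff
    exact_mod_cast Nat.choose_pos (by omega : h - 1 ≤ n - 1)
  have hlog : 0 < Real.log n :=
    Real.log_pos (by exact_mod_cast lt_of_lt_of_le (by omega) hn)
  have hx : 0 < t n := div_pos hlog hc
  have hexp : Real.exp (epsSeq h lam n) = (lam * t n)⁻¹ := by
    unfold epsSeq
    rw [Real.exp_neg, Real.exp_log (by positivity), ht]
    simp [mul_div_assoc]
  show (_ : ℝ) = _
  have : pTildeSeq h a lam n * binomCoeff n h / Real.log n
      = ((1 - 1/((lam * t n)⁻¹ + 1)) * (a * t n) + (1/((lam * t n)⁻¹ + 1)) * (1 - a * t n)) / t n := by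
    unfold pTildeSeq nuSeq pSeq
    rw [hexp, ht]
    have hL : Real.log n ≠ 0 := ne_of_gt hlog
    have hcne : binomCoeff n h ≠ 0 := ne_of_gt hc
    field_simp
  simp only [Function.comp_apply]
  exact (this.trans (aux_alg a lam (t n) hx hlam)).symm
end

section
/- Let 0 < q ≤ p < 1 and let Pr(σ) be any probability distribution on labelings σ : V → {+1,−1}. Define the likelihood Pr(H|σ) = ∏_{w ∈ W} r_w^{1[w ∈ W_H]} (1 − r_w)^{1[w ∉ W_H]}, where r_w = p if w is in-cluster with respect to σ and r_w = q otherwise; the marginal Pr(H) = ∑_σ Pr(σ) Pr(H|σ); and, whenever Pr(H) > 0, the posterior Pr(σ|H) = Pr(σ) Pr(H|σ) / Pr(H). Then for any neighboring hypergraphs H and H̃ (i.e. |W_H Δ W_H̃| = 1) with Pr(H) > 0 and Pr(H̃) > 0, and every labeling σ, Pr(σ|H) ≤ ( p(1−q) / (q(1−p)) ) · Pr(σ|H̃). In particular, the Bayesian sampling mechanism that outputs σ with probability Pr(σ|H) satisfies ε-hyperedge differential privacy for every ε ≥ log( p(1−q) / (q(1−p)) ). -/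
open Finset

/-- The set `W` of all possible hyperedges: the `h`-element subsets of `V = {1,…,n}`. -/
def edges (n h : ℕ) : Finset (Finset (Fin n)) := Finset.powersetCard h Finset.univ

/-- The likelihood `Pr(H|σ) = ∏_{w ∈ W} r_w^{1[w ∈ W_H]} (1 − r_w)^{1[w ∉ W_H]}`, where
`r_w = p` if `w` is in-cluster w.r.t. `σ` and `r_w = q` otherwise. -/
noncomputable def likelihood (n h : ℕ) (p q : ℝ) (σ : Fin n → Bool)
    (H : Finset (Finset (Fin n))) : ℝ :=
  ∏ w ∈ edges n h,
    if w ∈ H then (if ∀ u ∈ w, ∀ v ∈ w, σ u = σ v then p else q)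
    else 1 - (if ∀ u ∈ w, ∀ v ∈ w, σ u = σ v then p else q)

/-- The marginal `Pr(H) = ∑_σ Pr(σ) Pr(H|σ)` for a prior `Pr(σ)` on labelings. -/
noncomputable def marginal (n h : ℕ) (p q : ℝ) (prior : (Fin n → Bool) → ℝ)
    (H : Finset (Finset (Fin n))) : ℝ :=
  ∑ σ : Fin n → Bool, prior σ * likelihood n h p q σ H

/-- The posterior `Pr(σ|H) = Pr(σ) Pr(H|σ) / Pr(H)`. -/
noncomputable def posterior (n h : ℕ) (p q : ℝ) (prior : (Fin n → Bool) → ℝ)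
    (H : Finset (Finset (Fin n))) (σ : Fin n → Bool) : ℝ :=
  prior σ * likelihood n h p q σ H / marginal n h p q prior H

lemma lik_nonneg (n h : ℕ) (p q : ℝ) (hq : 0 < q) (hqp : q ≤ p) (hp : p < 1)
    (σ : Fin n → Bool) (H : Finset (Finset (Fin n))) :
    0 ≤ likelihood n h p q σ H := by
  apply Finset.prod_nonneg
  intro w _
  split_ifs <;> linarith

lemma lik_ratio (n h : ℕ) (p q : ℝ) (hq : 0 < q) (hqp : q ≤ p) (hp : p < 1)
    (σ : Fin n → Bool) (w0 : Finset (Fin n)) (hw0 : w0 ∈ edges n h)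
    (H Ht : Finset (Finset (Fin n))) (hmem : w0 ∈ H) (hnmem : w0 ∉ Ht)
    (hagree : ∀ w, w ≠ w0 → (w ∈ H ↔ w ∈ Ht)) :
    likelihood n h p q σ H ≤ (p / (1 - p)) * likelihood n h p q σ Ht ∧
    likelihood n h p q σ Ht ≤ ((1 - q) / q) * likelihood n h p q σ H := by
  set r : ℝ := if ∀ u ∈ w0, ∀ v ∈ w0, σ u = σ v then p else q with hr
  have hr1 : 0 < r := by rw [hr]; split_ifs <;> linarith
  have hr2 : r < 1 := by rw [hr]; split_ifs <;> linarith
  have hrp : r ≤ p := by rw [hr]; split_ifs <;> linarith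
  have hqr : q ≤ r := by rw [hr]; split_ifs <;> linarith
  set P : ℝ := ∏ w ∈ (edges n h).erase w0,
    (if w ∈ H then (if ∀ u ∈ w, ∀ v ∈ w, σ u = σ v then p else q)
     else 1 - (if ∀ u ∈ w, ∀ v ∈ w, σ u = σ v then p else q)) with hP
  have hPnn : 0 ≤ P := by
    apply Finset.prod_nonneg; intro w _; split_ifs <;> linarith
  have hLH : likelihood n h p q σ H = r * P := by
    rw [likelihood, ← Finset.mul_prod_erase _ _ hw0, if_pos hmem]
  have hLHt : likelihood n h p q σ Ht = (1 - r) * P := by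
    rw [likelihood, ← Finset.mul_prod_erase _ _ hw0, if_neg hnmem, hP]
    congr 1
    apply Finset.prod_congr rfl
    intro w hw
    have hne : w ≠ w0 := (Finset.mem_erase.mp hw).1
    by_cases hwH : w ∈ H
    · rw [if_pos ((hagree w hne).mp hwH), if_pos hwH]
    · rw [if_neg (fun hc => hwH ((hagree w hne).mpr hc)), if_neg hwH]
  constructor
  · rw [hLH, hLHt]
    have : r ≤ p / (1 - p) * (1 - r) := by
      rw [div_mul_eq_mul_div, le_div_iff₀ (by linarith)]
      nlinarith
    calc r * P ≤ (p / (1 - p) * (1 - r)) * P := by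
          exact mul_le_mul_of_nonneg_right this hPnn
      _ = p / (1 - p) * ((1 - r) * P) := by ring
  · rw [hLH, hLHt]
    have : (1 - r) ≤ (1 - q) / q * r := by
      rw [div_mul_eq_mul_div, le_div_iff₀ hq]
      nlinarith
    calc (1 - r) * P ≤ ((1 - q) / q * r) * P := by
          exact mul_le_mul_of_nonneg_right this hPnn
      _ = (1 - q) / q * (r * P) := by ring

lemma post_bound (n h : ℕ) (p q : ℝ) (hq : 0 < q) (hqp : q ≤ p) (hp : p < 1)
    (prior : (Fin n → Bool) → ℝ) (hprior : ∀ σ, 0 ≤ prior σ)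
    (H Ht : Finset (Finset (Fin n))) (a b : ℝ) (ha : 0 ≤ a) (hb : 0 ≤ b)
    (h1 : ∀ σ, likelihood n h p q σ H ≤ a * likelihood n h p q σ Ht)
    (h2 : ∀ σ, likelihood n h p q σ Ht ≤ b * likelihood n h p q σ H)
    (hPH : 0 < marginal n h p q prior H) (hPHt : 0 < marginal n h p q prior Ht)
    (σ : Fin n → Bool) :
    posterior n h p q prior H σ ≤ (a * b) * posterior n h p q prior Ht σ := by
  have hMt : marginal n h p q prior Ht ≤ b * marginal n h p q prior H := by
    rw [marginal, marginal, Finset.mul_sum]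
    apply Finset.sum_le_sum
    intro τ _
    calc prior τ * likelihood n h p q τ Ht
        ≤ prior τ * (b * likelihood n h p q τ H) :=
          mul_le_mul_of_nonneg_left (h2 τ) (hprior τ)
      _ = b * (prior τ * likelihood n h p q τ H) := by ring
  rw [posterior, posterior, mul_div_assoc', div_le_div_iff₀ hPH hPHt]
  have hLnn := lik_nonneg n h p q hq hqp hp σ Ht
  have hLnn' := lik_nonneg n h p q hq hqp hp σ H
  calc prior σ * likelihood n h p q σ H * marginal n h p q prior Ht
      ≤ prior σ * (a * likelihood n h p q σ Ht) * (b * marginal n h p q prior H) := by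
        apply mul_le_mul
        · exact mul_le_mul_of_nonneg_left (h1 σ) (hprior σ)
        · exact hMt
        · exact le_of_lt hPHt
        · exact mul_nonneg (hprior σ) (mul_nonneg ha hLnn)
    _ = a * b * (prior σ * likelihood n h p q σ Ht) * marginal n h p q prior H := by ring

/-- Differential privacy of the Bayesian sampling mechanism: for `0 < q ≤ p < 1`, any prior
distribution on labelings, and any neighboring hypergraphs `H`, `H̃` with positive marginals,
`Pr(σ|H) ≤ (p(1−q)/(q(1−p))) Pr(σ|H̃)` for every labeling `σ`; in particular, the mechanism
outputting `σ` with probability `Pr(σ|H)` satisfies `ε`-hyperedge DP for every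
`ε ≥ log(p(1−q)/(q(1−p)))`. -/
theorem stmt12 (n h : ℕ) (hh : 2 ≤ h) (hn : h ≤ n) (p q : ℝ)
    (hq : 0 < q) (hqp : q ≤ p) (hp : p < 1)
    (prior : (Fin n → Bool) → ℝ) (hprior : ∀ σ, 0 ≤ prior σ)
    (hprior1 : ∑ σ : Fin n → Bool, prior σ = 1)
    (H Ht : Finset (Finset (Fin n))) (hH : H ⊆ edges n h) (hHt : Ht ⊆ edges n h)
    (hneighbor : ((H \ Ht) ∪ (Ht \ H)).card = 1)
    (hPH : 0 < marginal n h p q prior H) (hPHt : 0 < marginal n h p q prior Ht) :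
    (∀ σ : Fin n → Bool,
        posterior n h p q prior H σ
          ≤ (p * (1 - q) / (q * (1 - p))) * posterior n h p q prior Ht σ) ∧
    (∀ ε : ℝ, Real.log (p * (1 - q) / (q * (1 - p))) ≤ ε →
      ∀ σ : Fin n → Bool,
        posterior n h p q prior H σ ≤ Real.exp ε * posterior n h p q prior Ht σ) := by
  obtain ⟨w0, hw0eq⟩ := Finset.card_eq_one.mp hneighbor
  have hCeq : p / (1 - p) * ((1 - q) / q) = p * (1 - q) / (q * (1 - p)) := by
    rw [div_mul_div_comm, mul_comm (1 - p) q]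
  have hp0 : 0 < p := lt_of_lt_of_le hq hqp
  have hq1 : q < 1 := lt_of_le_of_lt hqp hp
  have h1p : 0 < 1 - p := by linarith
  have h1q : 0 < 1 - q := by linarith
  have hagree : ∀ w, w ≠ w0 → (w ∈ H ↔ w ∈ Ht) := by
    intro w hne
    constructor
    · intro hw
      by_contra hc
      have : w ∈ (H \ Ht) ∪ (Ht \ H) := Finset.mem_union_left _ (Finset.mem_sdiff.mpr ⟨hw, hc⟩)
      rw [hw0eq] at this
      exact hne (Finset.mem_singleton.mp this)
    · intro hw
      by_contra hc
      have : w ∈ (H \ Ht) ∪ (Ht \ H) := Finset.mem_union_right _ (Finset.mem_sdiff.mpr ⟨hw, hc⟩)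
      rw [hw0eq] at this
      exact hne (Finset.mem_singleton.mp this)
  have hw0mem : w0 ∈ (H \ Ht) ∪ (Ht \ H) := by rw [hw0eq]; exact Finset.mem_singleton_self w0
  have key : ∀ σ : Fin n → Bool,
      posterior n h p q prior H σ
        ≤ (p * (1 - q) / (q * (1 - p))) * posterior n h p q prior Ht σ := by
    intro σ
    rcases Finset.mem_union.mp hw0mem with hcase | hcase
    · obtain ⟨hmem, hnmem⟩ := Finset.mem_sdiff.mp hcase
      have hw0e : w0 ∈ edges n h := hH hmem
      have h1 := fun τ => (lik_ratio n h p q hq hqp hp τ w0 hw0e H Ht hmem hnmem hagree).1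
      have h2 := fun τ => (lik_ratio n h p q hq hqp hp τ w0 hw0e H Ht hmem hnmem hagree).2
      have := post_bound n h p q hq hqp hp prior hprior H Ht
        (p / (1 - p)) ((1 - q) / q)
        (by positivity) (by positivity) h1 h2 hPH hPHt σ
      rwa [hCeq] at this
    · obtain ⟨hmem, hnmem⟩ := Finset.mem_sdiff.mp hcase
      have hw0e : w0 ∈ edges n h := hHt hmem
      have hagree' : ∀ w, w ≠ w0 → (w ∈ Ht ↔ w ∈ H) := fun w hne => (hagree w hne).symm
      have h1 := fun τ => (lik_ratio n h p q hq hqp hp τ w0 hw0e Ht H hmem hnmem hagree').2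
      have h2 := fun τ => (lik_ratio n h p q hq hqp hp τ w0 hw0e Ht H hmem hnmem hagree').1
      have := post_bound n h p q hq hqp hp prior hprior H Ht
        ((1 - q) / q) (p / (1 - p))
        (by positivity) (by positivity) h1 h2 hPH hPHt σ
      rwa [mul_comm ((1 - q) / q) (p / (1 - p)), hCeq] at this
  refine ⟨key, fun ε hε σ => ?_⟩
  have hC : 0 < p * (1 - q) / (q * (1 - p)) := by positivity
  have hCexp : p * (1 - q) / (q * (1 - p)) ≤ Real.exp ε := by
    calc p * (1 - q) / (q * (1 - p)) = Real.exp (Real.log (p * (1 - q) / (q * (1 - p)))) :=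
          (Real.exp_log hC).symm
      _ ≤ Real.exp ε := Real.exp_le_exp.mpr hε
  have hpost : 0 ≤ posterior n h p q prior Ht σ :=
    div_nonneg (mul_nonneg (hprior σ) (lik_nonneg n h p q hq hqp hp σ Ht)) hPHt.le
  calc posterior n h p q prior H σ
      ≤ (p * (1 - q) / (q * (1 - p))) * posterior n h p q prior Ht σ := key σ
    _ ≤ Real.exp ε * posterior n h p q prior Ht σ :=
        mul_le_mul_of_nonneg_right hCexp hpost
end
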